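/- Let r_max ∈ [1, 1+√2) and set η := 2r_max²/(1+r_max)². With 𝒦(s) := (1−η)/η² · ((1+2s)η − s²)/(1+s), one has 𝒦(r_max) ≤ 𝒦(r) for every r ∈ (0, r_max). -/
import Mathlib


/-- The step-size function 𝒦 from Remark 3.1:
𝒦(s) = (1−η)/η² · ((1+2s)η − s²)/(1+s). -/
noncomputable def Kfun (η s : ℝ) : ℝ :=
  (1 - η) / η ^ 2 * (((1 + 2 * s) * η - s ^ 2) / (1 + s))

/-- For r_max ∈ [1, 1+√2) and η = 2r_max²/(1+r_max)², one has
𝒦(r_max) ≤ 𝒦(r) for every r ∈ (0, r_max). -/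
theorem stmt18 (rmax : ℝ) (h1 : 1 ≤ rmax) (h2 : rmax < 1 + Real.sqrt 2) :
    ∀ r : ℝ, 0 < r → r < rmax →
      Kfun (2 * rmax ^ 2 / (1 + rmax) ^ 2) rmax ≤
        Kfun (2 * rmax ^ 2 / (1 + rmax) ^ 2) r := by
  intro r hr hrlt
  set η : ℝ := 2 * rmax ^ 2 / (1 + rmax) ^ 2 with hη
  have hpos : (0:ℝ) < 1 + rmax := by linarith
  have hsq : Real.sqrt 2 ^ 2 = 2 := Real.sq_sqrt (by norm_num)
  have hs1 : (1:ℝ) ≤ Real.sqrt 2 := by nlinarith [Real.sqrt_nonneg 2]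
  have hηpos : 0 < η := by
    rw [hη]; positivity
  have hηlt : η < 1 := by
    rw [hη, div_lt_one (by positivity)]
    nlinarith [Real.sqrt_nonneg 2]
  unfold Kfun
  have hC : 0 < (1 - η) / η ^ 2 := div_pos (by linarith) (by positivity)
  apply mul_le_mul_of_nonneg_left _ hC.le
  rw [div_le_div_iff₀ hpos (by linarith : (0:ℝ) < 1 + r)]
  nlinarith [mul_pos (by linarith : (0:ℝ) < rmax - r)
    (by nlinarith : (0:ℝ) < rmax + r + r * rmax - η)]
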